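/- Let G be a finite simple graph and let (M, σ) be an induced matching of size k in G together with a dominating transversal σ. Then the homology class α_M ∈ H̃_{k-1}(I(G); ℚ) and the cohomology class σ^∨ ∈ H̃^{k-1}(I(G); ℚ) are both nonzero, and the evaluation pairing satisfies ⟨σ^∨, α_M⟩ = ±1. -/

import Mathlib

attribute [local instance] Classical.propDecidable

noncomputable section

open Finset Module
open scoped DirectSum

universe u

/-- An abstract simplicial complex on vertex type `V`, encoded by its set of faces
(finite subsets of `V`), required to be downward closed and to contain the empty face.
(The complex with only the empty face is the "empty complex", i.e. `S^{-1}`.) -/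
structure SComplex (V : Type u) where
  faces : Set (Finset V)
  empty_mem : ∅ ∈ faces
  down_closed : ∀ {s t : Finset V}, s ∈ faces → t ⊆ s → t ∈ faces

namespace SComplex

variable {V : Type u}

/-- Ordered `j`-simplices of `K`: tuples of `j` vertices (repetitions allowed) spanning a
face of `K`.  Chains on these compute the reduced homology of `K` (this is the augmented,
unnormalized chain complex of the simplicial set associated to `K`); the level `j`
corresponds to reduced degree `j - 1`. -/
def OSimplex (K : SComplex V) (j : ℕ) : Type u :=
  {t : Fin j → V // Finset.univ.image t ∈ K.faces}

/-- The `ℚ`-vector space of (level `j`, i.e. reduced degree `j-1`) simplicial chains. -/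
abbrev Chain (K : SComplex V) (j : ℕ) : Type u := OSimplex K j →₀ ℚ

/-- The basis chain corresponding to a single ordered simplex. -/
def ofSimplex (K : SComplex V) (j : ℕ) (s : OSimplex K j) : Chain K j :=
  Finsupp.single s 1

/-- Boundary of a single ordered simplex: the alternating sum of its facets. -/
def bdryO (K : SComplex V) (j : ℕ) (s : OSimplex K (j + 1)) : Chain K j :=
  ∑ i : Fin (j + 1), Finsupp.single
    ⟨s.1 ∘ i.succAbove, K.down_closed s.2 (by
      intro v hv
      simp only [Finset.mem_image] at hv ⊢
      obtain ⟨w, -, rfl⟩ := hv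
      exact ⟨i.succAbove w, Finset.mem_univ _, rfl⟩)⟩
    ((-1 : ℚ) ^ (i : ℕ))

/-- The simplicial boundary map (from level `j+1` to level `j`). -/
def bdry (K : SComplex V) (j : ℕ) : Chain K (j + 1) →ₗ[ℚ] Chain K j :=
  Finsupp.lsum ℚ fun s => LinearMap.toSpanSingleton ℚ (Chain K j) (bdryO K j s)

/-- Cycles at level `j` (reduced degree `j - 1`).  At level `0` (spanned by the empty
simplex) every chain is a cycle: this is the augmented complex. -/
def cyclesAt (K : SComplex V) : (j : ℕ) → Submodule ℚ (Chain K j)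
  | 0 => ⊤
  | j + 1 => LinearMap.ker (bdry K j)

/-- Boundaries at level `j`. -/
def boundariesAt (K : SComplex V) (j : ℕ) : Submodule ℚ (Chain K j) :=
  LinearMap.range (bdry K j)

/-- Reduced simplicial homology with rational coefficients:
`homologyAt K j` is the reduced homology group `H̃_{j-1}(K; ℚ)`
(so `homologyAt K 0 = H̃_{-1}`, `homologyAt K (i+1) = H̃_i`). -/
abbrev homologyAt (K : SComplex V) (j : ℕ) : Type u :=
  cyclesAt K j ⧸ ((boundariesAt K j).comap (cyclesAt K j).subtype)

/-- The homology class of a cycle. -/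
def hClass (K : SComplex V) (j : ℕ) (z : Chain K j) (hz : z ∈ cyclesAt K j) :
    homologyAt K j :=
  Submodule.Quotient.mk ⟨z, hz⟩

/-- The reduced Betti number `β̃_{j-1}(K) = dim_ℚ H̃_{j-1}(K; ℚ)`. -/
def bettiAt (K : SComplex V) (j : ℕ) : ℕ := finrank ℚ (homologyAt K j)

/-- The total reduced Betti number `β̃(K) = ∑_i β̃_i(K)` (including degree `-1`). -/
def totalBetti (K : SComplex V) : ℕ := finrank ℚ (⨁ j : ℕ, homologyAt K j)

/-- Simplicial cochains with rational coefficients. -/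
abbrev Cochain (K : SComplex V) (j : ℕ) : Type u := Chain K j →ₗ[ℚ] ℚ

/-- The simplicial coboundary map, the transpose of the boundary. -/
def cobdry (K : SComplex V) (j : ℕ) : Cochain K j →ₗ[ℚ] Cochain K (j + 1) :=
  (bdry K j).dualMap

/-- Cocycles at level `j` (reduced degree `j-1`). -/
def cocyclesAt (K : SComplex V) (j : ℕ) : Submodule ℚ (Cochain K j) :=
  LinearMap.ker (cobdry K j)

/-- Coboundaries at level `j`. -/
def cobordsAt (K : SComplex V) : (j : ℕ) → Submodule ℚ (Cochain K j)
  | 0 => ⊥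
  | j + 1 => LinearMap.range (cobdry K j)

/-- Reduced simplicial cohomology with rational coefficients:
`cohomologyAt K j` is `H̃^{j-1}(K; ℚ)`. -/
abbrev cohomologyAt (K : SComplex V) (j : ℕ) : Type u :=
  cocyclesAt K j ⧸ ((cobordsAt K j).comap (cocyclesAt K j).subtype)

/-- The cohomology class of a cocycle. -/
def hcClass (K : SComplex V) (j : ℕ) (γ : Cochain K j) (hγ : γ ∈ cocyclesAt K j) :
    cohomologyAt K j :=
  Submodule.Quotient.mk ⟨γ, hγ⟩

/-- Evaluation of a cocycle on homology classes. -/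
def pairingAux (K : SComplex V) (j : ℕ) (γ : cocyclesAt K j) :
    homologyAt K j →ₗ[ℚ] ℚ :=
  Submodule.liftQ _ ((γ : Cochain K j).comp (cyclesAt K j).subtype) (by
    rintro ⟨z, hz⟩ hmem
    simp only [Submodule.mem_comap, Submodule.subtype_apply] at hmem
    obtain ⟨x, hx⟩ := hmem
    simp only [LinearMap.mem_ker, LinearMap.comp_apply, Submodule.subtype_apply]
    have hker : cobdry K j (γ : Cochain K j) = 0 := γ.2
    have h2 : (cobdry K j (γ : Cochain K j)) x = 0 := by rw [hker]; rfl
    calc (γ : Cochain K j) z = (γ : Cochain K j) (bdry K j x) := by rw [hx]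
      _ = (cobdry K j (γ : Cochain K j)) x := rfl
      _ = 0 := h2)

/-- The evaluation pairing `⟨·,·⟩ : H̃^{j-1}(K;ℚ) ⊗ H̃_{j-1}(K;ℚ) → ℚ`
given by evaluating cochains on chains. -/
def pairing (K : SComplex V) (j : ℕ) :
    cohomologyAt K j →ₗ[ℚ] homologyAt K j →ₗ[ℚ] ℚ :=
  Submodule.liftQ _
    { toFun := fun γ => pairingAux K j γ
      map_add' := by
        intro γ δ
        apply LinearMap.ext
        intro x
        obtain ⟨⟨z, hz⟩, rfl⟩ := Submodule.Quotient.mk_surjective _ x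
        simp [pairingAux, Submodule.liftQ_apply]
      map_smul' := by
        intro c γ
        apply LinearMap.ext
        intro x
        obtain ⟨⟨z, hz⟩, rfl⟩ := Submodule.Quotient.mk_surjective _ x
        simp [pairingAux, Submodule.liftQ_apply] }
    (by
      rintro ⟨γ, hγ⟩ hmem
      simp only [Submodule.mem_comap, Submodule.subtype_apply] at hmem
      simp only [LinearMap.mem_ker]
      apply LinearMap.ext
      intro x
      obtain ⟨⟨z, hz⟩, rfl⟩ := Submodule.Quotient.mk_surjective _ x
      simp only [LinearMap.coe_mk, AddHom.coe_mk, LinearMap.zero_apply]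
      cases j with
      | zero =>
          have : γ = 0 := by simpa [cobordsAt] using hmem
          simp [pairingAux, Submodule.liftQ_apply, this]
      | succ j =>
          obtain ⟨η, hη⟩ := hmem
          have hz0 : bdry K j z = 0 := hz
          simp only [pairingAux, Submodule.liftQ_apply]
          calc γ.comp (cyclesAt K (j+1)).subtype ⟨z, hz⟩ = γ z := rfl
            _ = (cobdry K j η) z := by rw [hη]
            _ = η (bdry K j z) := rfl
            _ = 0 := by rw [hz0]; exact map_zero η)

end SComplex
section Graphs

open SComplex

variable {V : Type u}

/-- The independence complex `I(G)` of a graph `G`: faces are the independent sets. -/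
def indepComplex (G : SimpleGraph V) : SComplex V where
  faces := {s : Finset V | ∀ v ∈ s, ∀ w ∈ s, ¬ G.Adj v w}
  empty_mem := by simp
  down_closed := by
    intro s t hs hts v hv w hw
    exact hs v (hts hv) w (hts hw)

/-- `s` is an independent set of the graph `G`. -/
def IsIndepSet (G : SimpleGraph V) (s : Finset V) : Prop :=
  ∀ v ∈ s, ∀ w ∈ s, ¬ G.Adj v w

/-- `σ` is a dominating set of `G`: every vertex is in the closed neighbourhood `N[σ]`. -/
def IsDominating (G : SimpleGraph V) (σ : Finset V) : Prop :=
  ∀ v : V, ∃ w ∈ σ, w = v ∨ G.Adj w v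

/-- The closed neighbourhood `N[σ]` of a finite set of vertices. -/
def closedNbhd (G : SimpleGraph V) (σ : Finset V) : Set V :=
  {v | ∃ w ∈ σ, w = v ∨ G.Adj w v}

/-- An induced matching of size `k` in `G`: `k` edges `(fst i, snd i)` such that
any two vertices belonging to distinct edges are distinct and non-adjacent. -/
structure InducedMatching (G : SimpleGraph V) (k : ℕ) where
  fst : Fin k → V
  snd : Fin k → V
  adj : ∀ i, G.Adj (fst i) (snd i)
  disjoint : ∀ i j, i ≠ j → fst i ≠ fst j ∧ fst i ≠ snd j ∧ snd i ≠ fst j ∧ snd i ≠ snd j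
  induced : ∀ i j, i ≠ j → ¬ G.Adj (fst i) (fst j) ∧ ¬ G.Adj (fst i) (snd j) ∧
    ¬ G.Adj (snd i) (fst j) ∧ ¬ G.Adj (snd i) (snd j)

namespace InducedMatching

variable {G : SimpleGraph V} {k : ℕ}

/-- The set of vertices covered by the matching. -/
def vertexFinset (M : InducedMatching G k) : Finset V :=
  Finset.univ.image M.fst ∪ Finset.univ.image M.snd

/-- A transversal of a matching: a set of vertices of the matching containing exactly one
vertex from each edge. -/
def IsTransversal (M : InducedMatching G k) (σ : Finset V) : Prop :=
  σ ⊆ M.vertexFinset ∧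
    ∀ i, (M.fst i ∈ σ ∧ M.snd i ∉ σ) ∨ (M.snd i ∈ σ ∧ M.fst i ∉ σ)

/-- The chain `([v_1] - [w_1]) ∧ ⋯ ∧ ([v_k] - [w_k])` representing the image `α_M` of the
fundamental class of the sphere `I(M) = S^{k-1}` in `I(G)`. -/
def matchingChain (M : InducedMatching G k) : Chain (indepComplex G) k :=
  ∑ c : Fin k → Bool,
    ((-1 : ℚ) ^ (Finset.univ.filter (fun i => c i = true)).card) •
      Finsupp.single
        ⟨fun i => if c i then M.snd i else M.fst i, by
          intro v hv w hw
          simp only [Finset.mem_image, Finset.mem_univ, true_and] at hv hw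
          obtain ⟨i, rfl⟩ := hv
          obtain ⟨j, rfl⟩ := hw
          by_cases hij : i = j
          · subst hij
            by_cases h : c i <;> simp [h, SimpleGraph.irrefl]
          · obtain ⟨h1, h2, h3, h4⟩ := M.induced i j hij
            by_cases hi : c i <;> by_cases hj : c j <;> simp [hi, hj, h1, h2, h3, h4]⟩
        1

end InducedMatching

namespace SComplex

/-- The coefficient of the cochain `σ^∨` on an ordered simplex: `±1` (the sign of the
corresponding permutation) on the orderings of `σ` and `0` on all other simplices. -/
def dualCoeff (K : SComplex V) (k : ℕ) (σ : Finset V) (s : OSimplex K k) : ℚ :=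
  if h : Function.Injective s.1 ∧ Finset.univ.image s.1 = σ then
    have hcard : Fintype.card {x // x ∈ σ} = k := by
      rw [Fintype.card_coe, ← h.2, Finset.card_image_of_injective _ h.1]
      simp
    ((Equiv.Perm.sign
      ((Equiv.ofBijective
          (fun i : Fin k => (⟨s.1 i, by
            rw [← h.2]; exact Finset.mem_image_of_mem _ (Finset.mem_univ i)⟩ : {x // x ∈ σ}))
          (by
            rw [Fintype.bijective_iff_injective_and_card]
            exact ⟨fun a b hab => h.1 (congrArg Subtype.val hab), by simp [hcard]⟩)).trans
        (Fintype.equivFinOfCardEq hcard)) : ℤ) : ℚ)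
  else 0

/-- The cochain `σ^∨` associated to an independent set `σ` of cardinality `k`: it assigns
`±1` to the two orientations of `σ` and `0` to all other simplices.  When `σ` is a maximal
independent set this cochain is a cocycle. -/
def dualCochain (K : SComplex V) (k : ℕ) (σ : Finset V) : Cochain K k :=
  Finsupp.linearCombination ℚ (dualCoeff K k σ)

end SComplex

end Graphs

/-!
Flipping the endpoint chosen from the `i`-th edge negates a term of `α_M` without changing its
`i`-th facet, so the boundary of `α_M` cancels in pairs. The value of `σ^∨` on an ordered simplex
is the determinant of its incidence matrix against an enumeration of `σ`; Laplace expansion along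
a column of ones turns `(δσ^∨)(t)` into a determinant that vanishes unless `t` enumerates
`σ ∪ {v}` with `v ∉ σ`, and such a set is never independent because `σ` dominates `v`. Of the
`2^k` terms of `α_M` only the one enumerating `σ` is seen by `σ^∨`, so `⟨σ^∨, α_M⟩ = ±1`, which
forces both classes to be nonzero.
-/

section Incidence

variable {V : Type u}

def incidenceMatrix {j k : ℕ} (t : Fin j → V) (e : Fin k → V) : Matrix (Fin j) (Fin k) ℚ :=
  Matrix.of fun i l => if t i = e l then 1 else 0

theorem det_incidenceMatrix_eq_sign {k : ℕ} {t e : Fin k → V} (P : Equiv.Perm (Fin k))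
    (he : Function.Injective e) (ht : ∀ i, t i = e (P i)) :
    (incidenceMatrix t e).det = Equiv.Perm.sign P := by
  have hP : incidenceMatrix t e = P.permMatrix ℚ := by
    ext i l
    simp [incidenceMatrix, ht, he.eq_iff, PEquiv.toMatrix_apply]
  rw [hP, Matrix.det_permutation]

theorem Finset.exists_notMem_insert_subset_image_of_injective {k : ℕ} {σ : Finset V}
    (hσ : σ.card = k) {t : Fin (k + 1) → V} (ht : Function.Injective t)
    (h : ∀ a b, a ≠ b → t a ∉ σ → t b ∈ σ) : ∃ v ∉ σ, insert v σ ⊆ Finset.univ.image t := by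
  obtain ⟨v, hvt, hvσ⟩ : ∃ v ∈ Finset.univ.image t, v ∉ σ := by
    refine Finset.exists_mem_notMem_of_card_lt_card ?_
    rw [Finset.card_image_of_injective _ ht, hσ, Finset.card_univ, Fintype.card_fin]
    exact k.lt_succ_self
  obtain ⟨a, -, rfl⟩ := Finset.mem_image.mp hvt
  have hrest : (Finset.univ.erase a).image t ⊆ σ := by
    simp only [Finset.image_subset_iff, Finset.mem_erase]
    exact fun b ⟨hba, _⟩ => h a b hba.symm hvσ
  have hσ_eq : (Finset.univ.erase a).image t = σ := by
    refine Finset.eq_of_subset_of_card_le hrest ?_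
    rw [Finset.card_image_of_injective _ ht, Finset.card_erase_of_mem (Finset.mem_univ a),
      Finset.card_univ, Fintype.card_fin, hσ, Nat.add_sub_cancel]
  refine ⟨t a, hvσ, ?_⟩
  rw [← hσ_eq, ← Finset.image_insert, Finset.insert_erase (Finset.mem_univ a)]

end Incidence

namespace SComplex

variable {V : Type u} (K : SComplex V)

theorem pairing_hcClass_hClass {j : ℕ} {γ : Cochain K j} (hγ : γ ∈ cocyclesAt K j)
    {z : Chain K j} (hz : z ∈ cyclesAt K j) :
    pairing K j (hcClass K j γ hγ) (hClass K j z hz) = γ z :=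
  rfl

theorem hClass_ne_zero_of_apply_ne_zero {j : ℕ} {γ : Cochain K j} (hγ : γ ∈ cocyclesAt K j)
    {z : Chain K j} (hz : z ∈ cyclesAt K j) (h : γ z ≠ 0) : hClass K j z hz ≠ 0 := by
  intro h0
  apply h
  rw [← pairing_hcClass_hClass K hγ hz, h0, map_zero]

theorem hcClass_ne_zero_of_apply_ne_zero {j : ℕ} {γ : Cochain K j} (hγ : γ ∈ cocyclesAt K j)
    {z : Chain K j} (hz : z ∈ cyclesAt K j) (h : γ z ≠ 0) : hcClass K j γ hγ ≠ 0 := by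
  intro h0
  apply h
  rw [← pairing_hcClass_hClass K hγ hz, h0, map_zero, LinearMap.zero_apply]

def facet {j : ℕ} (s : OSimplex K (j + 1)) (i : Fin (j + 1)) : OSimplex K j :=
  ⟨s.1 ∘ i.succAbove, K.down_closed s.2 (Finset.image_subset_iff.mpr fun _ _ =>
    Finset.mem_image_of_mem s.1 (Finset.mem_univ _))⟩

theorem bdryO_eq_sum_facet {j : ℕ} (s : OSimplex K (j + 1)) :
    bdryO K j s = ∑ i, Finsupp.single (K.facet s i) ((-1 : ℚ) ^ (i : ℕ)) :=
  rfl

theorem bdry_single {j : ℕ} (s : OSimplex K (j + 1)) (c : ℚ) :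
    bdry K j (Finsupp.single s c) = c • bdryO K j s := by
  rw [bdry, Finsupp.lsum_single, LinearMap.toSpanSingleton_apply]

theorem dualCochain_single {k : ℕ} (σ : Finset V) (s : OSimplex K k) (c : ℚ) :
    dualCochain K k σ (Finsupp.single s c) = c * dualCoeff K k σ s := by
  rw [dualCochain, Finsupp.linearCombination_single, smul_eq_mul]

theorem dualCoeff_eq_zero {k : ℕ} {σ : Finset V} {s : OSimplex K k}
    (h : ¬ (Function.Injective s.1 ∧ Finset.univ.image s.1 = σ)) : dualCoeff K k σ s = 0 :=
  dif_neg h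

theorem dualCoeff_eq_one_or_eq_neg_one {k : ℕ} {σ : Finset V} {s : OSimplex K k}
    (h : Function.Injective s.1 ∧ Finset.univ.image s.1 = σ) :
    dualCoeff K k σ s = 1 ∨ dualCoeff K k σ s = -1 := by
  rw [dualCoeff, dif_pos h]
  have units_cast (u : ℤˣ) : ((u : ℤ) : ℚ) = 1 ∨ ((u : ℤ) : ℚ) = -1 := by
    rcases Int.units_eq_one_or u with rfl | rfl <;> simp
  exact units_cast _

def enumOfCardEq {k : ℕ} (σ : Finset V) (hσ : σ.card = k) : Fin k → V :=
  fun l => (Fintype.equivFinOfCardEq ((Fintype.card_coe σ).trans hσ)).symm l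

theorem enumOfCardEq_injective {k : ℕ} {σ : Finset V} (hσ : σ.card = k) :
    Function.Injective (enumOfCardEq σ hσ) :=
  Subtype.val_injective.comp (Equiv.injective _)

theorem enumOfCardEq_mem {k : ℕ} {σ : Finset V} (hσ : σ.card = k) (l : Fin k) :
    enumOfCardEq σ hσ l ∈ σ :=
  Subtype.property _

theorem dualCoeff_eq_det {k : ℕ} {σ : Finset V} (hσ : σ.card = k) (s : OSimplex K k) :
    dualCoeff K k σ s = (incidenceMatrix s.1 (enumOfCardEq σ hσ)).det := by
  by_cases h : Function.Injective s.1 ∧ Finset.univ.image s.1 = σ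
  · rw [dualCoeff, dif_pos h]
    refine (det_incidenceMatrix_eq_sign _ (enumOfCardEq_injective hσ) fun i => ?_).symm
    simp [enumOfCardEq]
  rw [dualCoeff_eq_zero K h, eq_comm]
  by_cases hinj : Function.Injective s.1
  · obtain ⟨i, hi⟩ : ∃ i, s.1 i ∉ σ := by
      by_contra! hall
      refine h ⟨hinj, Finset.eq_of_subset_of_card_le ?_ ?_⟩
      · simpa [Finset.image_subset_iff] using hall
      · rw [Finset.card_image_of_injective _ hinj, hσ, Finset.card_univ, Fintype.card_fin]
    refine Matrix.det_eq_zero_of_row_eq_zero i fun l => if_neg ?_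
    rintro hil
    exact hi (hil ▸ enumOfCardEq_mem hσ l)
  · obtain ⟨a, b, hab, hne⟩ := Function.not_injective_iff.mp hinj
    exact Matrix.det_zero_of_row_eq hne (funext fun l => by simp [incidenceMatrix, hab])

theorem det_cons_one_incidenceMatrix_eq_zero {k : ℕ} {σ : Finset V} (hσ : σ.card = k)
    {t : Fin (k + 1) → V} {e : Fin k → V} (he : ∀ l, e l ∈ σ)
    (h : ∀ v ∉ σ, ¬ insert v σ ⊆ Finset.univ.image t) :
    (Matrix.of fun i => Fin.cons 1 (incidenceMatrix t e i)).det = 0 := by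
  by_cases ht : Function.Injective t
  · obtain ⟨a, b, hab, ha, hb⟩ : ∃ a b, a ≠ b ∧ t a ∉ σ ∧ t b ∉ σ := by
      by_contra! hle
      obtain ⟨v, hv, hsub⟩ := Finset.exists_notMem_insert_subset_image_of_injective hσ ht hle
      exact h v hv hsub
    -- both rows are `(1, 0, …, 0)`
    refine Matrix.det_zero_of_row_eq hab (funext fun l => Fin.cases rfl (fun l => ?_) l)
    have hne (c : Fin (k + 1)) (hc : t c ∉ σ) : t c ≠ e l := fun hce => hc (hce ▸ he l)
    simp [incidenceMatrix, hne a ha, hne b hb]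
  · obtain ⟨a, b, hab, hne⟩ := Function.not_injective_iff.mp ht
    exact Matrix.det_zero_of_row_eq hne
      (congrArg (fun x => (Fin.cons 1 fun l => if x = e l then 1 else 0 : Fin (k + 1) → ℚ)) hab)

theorem dualCochain_bdryO_eq_det {k : ℕ} {σ : Finset V} (hσ : σ.card = k)
    (s : OSimplex K (k + 1)) :
    dualCochain K k σ (bdryO K k s) =
      (Matrix.of fun i => Fin.cons 1 (incidenceMatrix s.1 (enumOfCardEq σ hσ) i)).det := by
  rw [Matrix.det_succ_column_zero, bdryO, map_sum]
  refine Finset.sum_congr rfl fun i _ => ?_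
  refine (dualCochain_single K σ _ _).trans ?_
  simp only [Matrix.of_apply, Fin.cons_zero, mul_one]
  exact congrArg _ (dualCoeff_eq_det K hσ _)

theorem dualCochain_mem_cocyclesAt {k : ℕ} {σ : Finset V} (hσ : σ.card = k)
    (hmax : ∀ v ∉ σ, insert v σ ∉ K.faces) : dualCochain K k σ ∈ cocyclesAt K k := by
  refine LinearMap.mem_ker.mpr (Finsupp.lhom_ext fun s c => ?_)
  change dualCochain K k σ (bdry K k (Finsupp.single s c)) = 0
  rw [bdry_single, map_smul, dualCochain_bdryO_eq_det K hσ,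
    det_cons_one_incidenceMatrix_eq_zero hσ (enumOfCardEq_mem hσ), smul_zero]
  exact fun v hv hsub => hmax v hv (K.down_closed s.2 hsub)

end SComplex

theorem neg_one_pow_card_filter_update_not {ι : Type*} [Fintype ι] [DecidableEq ι]
    (c : ι → Bool) (i : ι) :
    (-1 : ℚ) ^ (Finset.univ.filter fun j => Function.update c i (!c i) j = true).card =
      -(-1) ^ (Finset.univ.filter fun j => c j = true).card := by
  set S := Finset.univ.filter fun j => c j = true
  cases hci : c i
  · have hS : (Finset.univ.filter fun j => Function.update c i true j = true) = insert i S := by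
      ext j
      by_cases hji : j = i <;> simp [S, hji, Function.update_of_ne]
    rw [Bool.not_false, hS, Finset.card_insert_of_notMem (by simp [S, hci]), pow_succ]
    ring
  · have hS : (Finset.univ.filter fun j => Function.update c i false j = true) = S.erase i := by
      ext j
      by_cases hji : j = i <;> simp [S, hji, Function.update_of_ne]
    rw [Bool.not_true, hS, ← Finset.card_erase_add_one (s := S) (a := i) (by simp [S, hci]),
      pow_succ]
    ring

namespace InducedMatching

open SComplex

variable {V : Type u} {G : SimpleGraph V} {k : ℕ} (M : InducedMatching G k)

def select (c : Fin k → Bool) : Fin k → V := fun i => if c i then M.snd i else M.fst i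

theorem select_injective (c : Fin k → Bool) : Function.Injective (M.select c) := by
  intro a b hab
  by_contra hne
  obtain ⟨h1, h2, h3, h4⟩ := M.disjoint a b hne
  by_cases hca : c a <;> by_cases hcb : c b <;> simp_all [select]

theorem select_image_mem_faces (c : Fin k → Bool) :
    Finset.univ.image (M.select c) ∈ (indepComplex G).faces := by
  simp only [indepComplex, Set.mem_ofPred_eq, Finset.mem_image, Finset.mem_univ, true_and]
  rintro _ ⟨a, rfl⟩ _ ⟨b, rfl⟩
  by_cases hab : a = b
  · exact hab ▸ G.irrefl
  · obtain ⟨h1, h2, h3, h4⟩ := M.induced a b hab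
    by_cases hca : c a <;> by_cases hcb : c b <;> simp_all [select]

def selectSimplex (c : Fin k → Bool) : OSimplex (indepComplex G) k :=
  ⟨M.select c, M.select_image_mem_faces c⟩

theorem matchingChain_eq_sum_selectSimplex :
    M.matchingChain = ∑ c : Fin k → Bool,
      (-1 : ℚ) ^ (Finset.univ.filter fun i => c i = true).card •
        Finsupp.single (M.selectSimplex c) 1 :=
  rfl

theorem matchingChain_mem_cyclesAt : M.matchingChain ∈ cyclesAt (indepComplex G) k := by
  cases k with
  | zero => exact Submodule.mem_top
  | succ m =>
    change bdry (indepComplex G) m M.matchingChain = 0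
    rw [matchingChain_eq_sum_selectSimplex]
    simp only [map_sum, map_smul, bdry_single, one_smul, bdryO_eq_sum_facet, Finset.smul_sum]
    rw [Finset.sum_comm]
    refine Finset.sum_eq_zero fun i _ => ?_
    refine Finset.sum_ninvolution (fun c => Function.update c i (!c i)) (fun c => ?_)
      (fun c _ hc => by simpa using congrFun hc i) (fun c => Finset.mem_univ _)
      (fun c => by simp)
    rw [neg_one_pow_card_filter_update_not, neg_smul, add_neg_eq_zero]
    congr 2
    refine Subtype.ext (funext fun j => ?_)
    simp [facet, selectSimplex, select]

namespace IsTransversal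

variable {M} {σ : Finset V}

theorem select_mem_iff (ht : M.IsTransversal σ) (c : Fin k → Bool) (i : Fin k) :
    M.select c i ∈ σ ↔ c i = decide (M.snd i ∈ σ) := by
  rcases ht.2 i with ⟨hf, hs⟩ | ⟨hs, hf⟩ <;> cases hci : c i <;> simp [select, *]

theorem image_select_eq (ht : M.IsTransversal σ) :
    Finset.univ.image (M.select fun i => decide (M.snd i ∈ σ)) = σ := by
  refine Finset.Subset.antisymm
    (Finset.image_subset_iff.mpr fun i _ => (ht.select_mem_iff _ i).mpr rfl) fun v hv => ?_
  obtain ⟨i, rfl | rfl⟩ : ∃ i, M.fst i = v ∨ M.snd i = v := by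
    simpa [vertexFinset, or_comm, exists_or] using ht.1 hv
  · refine Finset.mem_image.mpr ⟨i, Finset.mem_univ i, ?_⟩
    rcases ht.2 i with ⟨-, hs⟩ | ⟨-, hf⟩
    · simp [select, hs]
    · exact absurd hv hf
  · exact Finset.mem_image.mpr ⟨i, Finset.mem_univ i, by simp [select, hv]⟩

theorem card_eq (ht : M.IsTransversal σ) : σ.card = k := by
  rw [← ht.image_select_eq, Finset.card_image_of_injective _ (M.select_injective _),
    Finset.card_univ, Fintype.card_fin]

theorem dualCochain_matchingChain (ht : M.IsTransversal σ) :
    dualCochain (indepComplex G) k σ M.matchingChain = 1 ∨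
      dualCochain (indepComplex G) k σ M.matchingChain = -1 := by
  set c₀ : Fin k → Bool := fun i => decide (M.snd i ∈ σ)
  have hother (c : Fin k → Bool) (hc : c ≠ c₀) :
      dualCoeff (indepComplex G) k σ (M.selectSimplex c) = 0 := by
    obtain ⟨i, hi⟩ := Function.ne_iff.mp hc
    refine dualCoeff_eq_zero _ fun ⟨_, himage⟩ => hi ((ht.select_mem_iff c i).mp ?_)
    exact himage ▸ Finset.mem_image_of_mem _ (Finset.mem_univ i)
  rw [matchingChain_eq_sum_selectSimplex, map_sum,
    Finset.sum_eq_single c₀ (fun c _ hc => by rw [map_smul, dualCochain_single, hother c hc,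
      mul_zero, smul_zero]) (fun h => absurd (Finset.mem_univ c₀) h),
    map_smul, dualCochain_single, one_mul, smul_eq_mul]
  have hsign := neg_one_pow_eq_or ℚ (Finset.univ.filter fun i => c₀ i = true).card
  rcases hsign with h | h <;>
    rcases dualCoeff_eq_one_or_eq_neg_one (indepComplex G)
      (s := M.selectSimplex c₀) ⟨M.select_injective c₀, ht.image_select_eq⟩ with h' | h' <;>
    simp [h, h']

end IsTransversal

end InducedMatching

theorem IsDominating.insert_notMem_faces {V : Type u} {G : SimpleGraph V} {σ : Finset V}
    (hd : IsDominating G σ) (v : V) (hv : v ∉ σ) : insert v σ ∉ (indepComplex G).faces := by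
  intro hindep
  obtain ⟨w, hw, rfl | hadj⟩ := hd v
  · exact hv hw
  · exact hindep w (Finset.mem_insert_of_mem hw) v (Finset.mem_insert_self v σ) hadj

theorem statement0_general {V : Type} (G : SimpleGraph V) (k : ℕ)
    (M : InducedMatching G k) (σ : Finset V)
    (ht : M.IsTransversal σ) (hd : IsDominating G σ) :
    ∃ (hz : M.matchingChain ∈ SComplex.cyclesAt (indepComplex G) k)
      (hc : SComplex.dualCochain (indepComplex G) k σ ∈
        SComplex.cocyclesAt (indepComplex G) k),
      SComplex.hClass (indepComplex G) k M.matchingChain hz ≠ 0 ∧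
      SComplex.hcClass (indepComplex G) k (SComplex.dualCochain (indepComplex G) k σ) hc ≠ 0 ∧
      (SComplex.pairing (indepComplex G) k
          (SComplex.hcClass (indepComplex G) k (SComplex.dualCochain (indepComplex G) k σ) hc)
          (SComplex.hClass (indepComplex G) k M.matchingChain hz) = 1 ∨
       SComplex.pairing (indepComplex G) k
          (SComplex.hcClass (indepComplex G) k (SComplex.dualCochain (indepComplex G) k σ) hc)
          (SComplex.hClass (indepComplex G) k M.matchingChain hz) = -1) := by
  have hz := M.matchingChain_mem_cyclesAt
  have hc := SComplex.dualCochain_mem_cocyclesAt _ ht.card_eq hd.insert_notMem_faces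
  have hval := ht.dualCochain_matchingChain
  have hne : SComplex.dualCochain (indepComplex G) k σ M.matchingChain ≠ 0 := by
    rcases hval with h | h <;> simp [h]
  refine ⟨hz, hc, SComplex.hClass_ne_zero_of_apply_ne_zero _ hc hz hne,
    SComplex.hcClass_ne_zero_of_apply_ne_zero _ hc hz hne, ?_⟩
  rwa [SComplex.pairing_hcClass_hClass]

/-- If `(M, σ)` is an induced matching of size `k` with a dominating
transversal in a finite simple graph `G`, then the homology class
`α_M ∈ H̃_{k-1}(I(G); ℚ)` (represented by the explicit cycle `matchingChain M`) and the
cohomology class `σ^∨ ∈ H̃^{k-1}(I(G); ℚ)` (represented by the cochain `dualCochain`)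
are both nonzero, and `⟨σ^∨, α_M⟩ = ±1`.
(Here level `k` corresponds to reduced (co)homology degree `k - 1`.) -/
theorem statement0 {V : Type} [Fintype V] (G : SimpleGraph V) (k : ℕ)
    (M : InducedMatching G k) (σ : Finset V)
    (ht : M.IsTransversal σ) (hd : IsDominating G σ) :
    ∃ (hz : M.matchingChain ∈ SComplex.cyclesAt (indepComplex G) k)
      (hc : SComplex.dualCochain (indepComplex G) k σ ∈
        SComplex.cocyclesAt (indepComplex G) k),
      SComplex.hClass (indepComplex G) k M.matchingChain hz ≠ 0 ∧
      SComplex.hcClass (indepComplex G) k (SComplex.dualCochain (indepComplex G) k σ) hc ≠ 0 ∧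
      (SComplex.pairing (indepComplex G) k
          (SComplex.hcClass (indepComplex G) k (SComplex.dualCochain (indepComplex G) k σ) hc)
          (SComplex.hClass (indepComplex G) k M.matchingChain hz) = 1 ∨
       SComplex.pairing (indepComplex G) k
          (SComplex.hcClass (indepComplex G) k (SComplex.dualCochain (indepComplex G) k σ) hc)
          (SComplex.hClass (indepComplex G) k M.matchingChain hz) = -1) :=
  statement0_general G k M σ ht hd
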